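/- For all integers i, j, k with i − j ≡ 1 (mod 3) and k even, the following identity holds in F: Z(i−1,j,k) · Z(i,j+1,k+1) = Z(i,j,k+1) · Z(i−1,j+1,k) + Z(i,j,k) · Z(i−1,j+1,k+1). -/
import Mathlib


noncomputable section

open MvPolynomial

/-- The field `F = ℚ(x₁,…,x₆)` of rational functions in six indeterminates over `ℚ`. -/
abbrev F : Type := FractionRing (MvPolynomial (Fin 6) ℚ)

/-- The indeterminate `x_{r+1}` as an element of `F` (so `x 0 = x₁, …, x 5 = x₆`). -/
def x (r : Fin 6) : F := algebraMap (MvPolynomial (Fin 6) ℚ) F (X r)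

/-- `A = (x₃x₅+x₄x₆)/(x₁x₂)` -/
def A : F := (x 2 * x 4 + x 3 * x 5) / (x 0 * x 1)

/-- `B = (x₁x₆+x₂x₅)/(x₃x₄)` -/
def B : F := (x 0 * x 5 + x 1 * x 4) / (x 2 * x 3)

/-- `C = (x₁x₃+x₂x₄)/(x₅x₆)` -/
def C : F := (x 0 * x 2 + x 1 * x 3) / (x 4 * x 5)

/-- `D = (x₁x₃x₆+x₂x₃x₅+x₂x₄x₆)/(x₁x₄x₅)` -/
def D : F := (x 0 * x 2 * x 5 + x 1 * x 2 * x 4 + x 1 * x 3 * x 5) / (x 0 * x 3 * x 4)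

/-- `E = (x₂x₄x₅+x₁x₃x₅+x₁x₄x₆)/(x₂x₃x₆)` -/
def E : F := (x 1 * x 3 * x 4 + x 0 * x 2 * x 4 + x 0 * x 3 * x 5) / (x 1 * x 2 * x 5)

/-- `a(i,j) = i² + ij + j² + 1 + i + 2j` -/
def a (i j : ℤ) : ℤ := i^2 + i*j + j^2 + 1 + i + 2*j

/-- `b(i,j) = i² + ij + j² + 1 + 2i + j` -/
def b (i j : ℤ) : ℤ := i^2 + i*j + j^2 + 1 + 2*i + j

/-- `c(i,j) = i² + ij + j² + 1` -/
def c (i j : ℤ) : ℤ := i^2 + i*j + j^2 + 1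

/-- The initial cluster variable `x_{r(i,j,k)}` determined by `2(i−j)+3k mod 6`:
`r = 1` if `≡ 5`, `r = 2` if `≡ 2`, `r = 3` if `≡ 4`, `r = 4` if `≡ 1`,
`r = 5` if `≡ 3`, and `r = 6` if `≡ 0 (mod 6)`. -/
def xr (i j k : ℤ) : F :=
  if (2*(i-j) + 3*k) % 6 = 5 then x 0
  else if (2*(i-j) + 3*k) % 6 = 2 then x 1
  else if (2*(i-j) + 3*k) % 6 = 4 then x 2
  else if (2*(i-j) + 3*k) % 6 = 1 then x 3
  else if (2*(i-j) + 3*k) % 6 = 3 then x 4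
  else x 5

/-- `Z(i,j,k) = x_{r(i,j,k)} · A^{⌊a(i,j)/3⌋} · B^{⌊b(i,j)/3⌋} · C^{⌊c(i,j)/3⌋} ·
D^{⌊(k−1)²/4⌋} · E^{⌊k²/4⌋}`.  (Note `Int` division by a positive integer is floor
division.) -/
def Z (i j k : ℤ) : F :=
  xr i j k * A ^ (a i j / 3) * B ^ (b i j / 3) * C ^ (c i j / 3)
    * D ^ ((k-1)^2 / 4) * E ^ (k^2 / 4)


lemma ediv3 (N q r : ℤ) (h : N = 3*q + r) (h0 : 0 ≤ r) (h1 : r < 3) : N / 3 = q := by omega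

lemma ediv4 (N q r : ℤ) (h : N = 4*q + r) (h0 : 0 ≤ r) (h1 : r < 4) : N / 4 = q := by omega

lemma x_ne_zero (r : Fin 6) : x r ≠ 0 := by
  simp only [x, ne_eq, IsFractionRing.to_map_eq_zero_iff]
  exact MvPolynomial.X_ne_zero r

lemma map_ne_zero_of_eval (p : MvPolynomial (Fin 6) ℚ)
    (h : eval (fun _ => (1:ℚ)) p ≠ 0) :
    algebraMap (MvPolynomial (Fin 6) ℚ) F p ≠ 0 := by
  intro h0
  apply h
  rw [(IsFractionRing.to_map_eq_zero_iff (K := F)).mp h0]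
  simp

lemma A_ne_zero : A ≠ 0 := by
  have h1 : x 2 * x 4 + x 3 * x 5
      = algebraMap (MvPolynomial (Fin 6) ℚ) F (X 2 * X 4 + X 3 * X 5) := by
    simp [x, map_add, map_mul]
  rw [A, h1]
  exact div_ne_zero (map_ne_zero_of_eval _ (by norm_num))
    (mul_ne_zero (x_ne_zero 0) (x_ne_zero 1))

lemma B_ne_zero : B ≠ 0 := by
  have h1 : x 0 * x 5 + x 1 * x 4
      = algebraMap (MvPolynomial (Fin 6) ℚ) F (X 0 * X 5 + X 1 * X 4) := by
    simp [x, map_add, map_mul]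
  rw [B, h1]
  exact div_ne_zero (map_ne_zero_of_eval _ (by norm_num))
    (mul_ne_zero (x_ne_zero 2) (x_ne_zero 3))

lemma C_ne_zero : C ≠ 0 := by
  have h1 : x 0 * x 2 + x 1 * x 3
      = algebraMap (MvPolynomial (Fin 6) ℚ) F (X 0 * X 2 + X 1 * X 3) := by
    simp [x, map_add, map_mul]
  rw [_root_.C, h1]
  exact div_ne_zero (map_ne_zero_of_eval _ (by norm_num))
    (mul_ne_zero (x_ne_zero 4) (x_ne_zero 5))

lemma key_exchange : x 4 * x 5 * C = x 0 * x 2 + x 1 * x 3 := by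
  rw [_root_.C, mul_comm, div_mul_cancel₀]
  exact mul_ne_zero (x_ne_zero 4) (x_ne_zero 5)

lemma xr_eq0 (i j k : ℤ) (h : (2*(i-j) + 3*k) % 6 = 0) : xr i j k = x 5 := by simp [xr, h]
lemma xr_eq1 (i j k : ℤ) (h : (2*(i-j) + 3*k) % 6 = 1) : xr i j k = x 3 := by simp [xr, h]
lemma xr_eq2 (i j k : ℤ) (h : (2*(i-j) + 3*k) % 6 = 2) : xr i j k = x 1 := by simp [xr, h]
lemma xr_eq3 (i j k : ℤ) (h : (2*(i-j) + 3*k) % 6 = 3) : xr i j k = x 4 := by simp [xr, h]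
lemma xr_eq4 (i j k : ℤ) (h : (2*(i-j) + 3*k) % 6 = 4) : xr i j k = x 2 := by simp [xr, h]
lemma xr_eq5 (i j k : ℤ) (h : (2*(i-j) + 3*k) % 6 = 5) : xr i j k = x 0 := by simp [xr, h]

/-- For `i − j ≡ 1 (mod 3)` and `k` even:
`Z(i−1,j,k)·Z(i,j+1,k+1) = Z(i,j,k+1)·Z(i−1,j+1,k) + Z(i,j,k)·Z(i−1,j+1,k+1)`. -/
theorem stmt_14 (i j k : ℤ) (h3 : (i - j) % 3 = 1) (h2 : Even k) :
    Z (i-1) j k * Z i (j+1) (k+1)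
      = Z i j (k+1) * Z (i-1) (j+1) k + Z i j k * Z (i-1) (j+1) (k+1) := by
  obtain ⟨n, hn⟩ := h2
  obtain ⟨m, hm⟩ : ∃ m : ℤ, i = j + 1 + 3*m := ⟨(i - j - 1)/3, by omega⟩
  subst hn hm
  -- the six initial-variable values
  have hx1 : xr (j + 1 + 3*m - 1) j (n + n) = x 5 := xr_eq0 _ _ _ (by omega)
  have hx2 : xr (j + 1 + 3*m) (j + 1) (n + n + 1) = x 4 := xr_eq3 _ _ _ (by omega)
  have hx3 : xr (j + 1 + 3*m) j (n + n + 1) = x 0 := xr_eq5 _ _ _ (by omega)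
  have hx4 : xr (j + 1 + 3*m - 1) (j + 1) (n + n) = x 2 := xr_eq4 _ _ _ (by omega)
  have hx5 : xr (j + 1 + 3*m) j (n + n) = x 1 := xr_eq2 _ _ _ (by omega)
  have hx6 : xr (j + 1 + 3*m - 1) (j + 1) (n + n + 1) = x 3 := xr_eq1 _ _ _ (by omega)
  -- the A-exponents
  have ha1 : a (j + 1 + 3*m - 1) j / 3 = (j + 3*m)*j + j + 3*m^2 + m :=
    ediv3 _ _ 1 (by simp only [a]; ring) (by norm_num) (by norm_num)
  have ha2 : a (j + 1 + 3*m) (j + 1) / 3 = (j + 1 + 3*m)*(j+1) + (j+1) + 3*m^2 + m :=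
    ediv3 _ _ 1 (by simp only [a]; ring) (by norm_num) (by norm_num)
  have ha3 : a (j + 1 + 3*m) j / 3 = (j + 1 + 3*m)*j + j + 3*m^2 + 3*m + 1 :=
    ediv3 _ _ 0 (by simp only [a]; ring) (by norm_num) (by norm_num)
  have ha4 : a (j + 1 + 3*m - 1) (j + 1) / 3 = (j + 3*m)*(j+1) + (j+1) + 3*m^2 - m :=
    ediv3 _ _ 1 (by simp only [a]; ring) (by norm_num) (by norm_num)
  -- the B-exponents
  have hb1 : b (j + 1 + 3*m - 1) j / 3 = (j + 3*m)*j + j + 3*m^2 + 2*m :=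
    ediv3 _ _ 1 (by simp only [b]; ring) (by norm_num) (by norm_num)
  have hb2 : b (j + 1 + 3*m) (j + 1) / 3 = (j + 1 + 3*m)*(j+1) + (j+1) + 3*m^2 + 2*m :=
    ediv3 _ _ 1 (by simp only [b]; ring) (by norm_num) (by norm_num)
  have hb3 : b (j + 1 + 3*m) j / 3 = (j + 1 + 3*m)*j + j + 3*m^2 + 4*m + 1 :=
    ediv3 _ _ 1 (by simp only [b]; ring) (by norm_num) (by norm_num)
  have hb4 : b (j + 1 + 3*m - 1) (j + 1) / 3 = (j + 3*m)*(j+1) + (j+1) + 3*m^2 :=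
    ediv3 _ _ 0 (by simp only [b]; ring) (by norm_num) (by norm_num)
  -- the C-exponents
  have hc1 : c (j + 1 + 3*m - 1) j / 3 = (j + 3*m)*j + 3*m^2 :=
    ediv3 _ _ 1 (by simp only [c]; ring) (by norm_num) (by norm_num)
  have hc2 : c (j + 1 + 3*m) (j + 1) / 3 = (j + 1 + 3*m)*(j+1) + 3*m^2 :=
    ediv3 _ _ 1 (by simp only [c]; ring) (by norm_num) (by norm_num)
  have hc3 : c (j + 1 + 3*m) j / 3 = (j + 1 + 3*m)*j + 3*m^2 + 2*m :=
    ediv3 _ _ 2 (by simp only [c]; ring) (by norm_num) (by norm_num)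
  have hc4 : c (j + 1 + 3*m - 1) (j + 1) / 3 = (j + 3*m)*(j+1) + 3*m^2 - 2*m :=
    ediv3 _ _ 2 (by simp only [c]; ring) (by norm_num) (by norm_num)
  -- the D/E-exponents
  have hd1 : (n + n - 1)^2 / 4 = n^2 - n := ediv4 _ _ 1 (by ring) (by norm_num) (by norm_num)
  have hd2 : (n + n)^2 / 4 = n^2 := ediv4 _ _ 0 (by ring) (by norm_num) (by norm_num)
  have hd3 : (n + n + 1 - 1)^2 / 4 = n^2 := ediv4 _ _ 0 (by ring) (by norm_num) (by norm_num)
  have hd4 : (n + n + 1)^2 / 4 = n^2 + n := ediv4 _ _ 1 (by ring) (by norm_num) (by norm_num)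
  simp only [Z, hx1, hx2, hx3, hx4, hx5, hx6, ha1, ha2, ha3, ha4, hb1, hb2, hb3, hb4,
    hc1, hc2, hc3, hc4, hd1, hd2, hd3, hd4]
  have hA0 := A_ne_zero
  have hB0 := B_ne_zero
  have hC0 := C_ne_zero
  have hAA : A ^ ((j + 3*m)*j + j + 3*m^2 + m) * A ^ ((j + 1 + 3*m)*(j+1) + (j+1) + 3*m^2 + m)
      = A ^ ((j + 1 + 3*m)*j + j + 3*m^2 + 3*m + 1) * A ^ ((j + 3*m)*(j+1) + (j+1) + 3*m^2 - m) := by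
    rw [← zpow_add₀ hA0, ← zpow_add₀ hA0]; congr 1; ring
  have hBB : B ^ ((j + 3*m)*j + j + 3*m^2 + 2*m) * B ^ ((j + 1 + 3*m)*(j+1) + (j+1) + 3*m^2 + 2*m)
      = B ^ ((j + 1 + 3*m)*j + j + 3*m^2 + 4*m + 1) * B ^ ((j + 3*m)*(j+1) + (j+1) + 3*m^2) := by
    rw [← zpow_add₀ hB0, ← zpow_add₀ hB0]; congr 1; ring
  have hCC : C ^ ((j + 3*m)*j + 3*m^2) * C ^ ((j + 1 + 3*m)*(j+1) + 3*m^2)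
      = C ^ ((j + 1 + 3*m)*j + 3*m^2 + 2*m) * C ^ ((j + 3*m)*(j+1) + 3*m^2 - 2*m) * C := by
    rw [← zpow_add₀ hC0, ← zpow_add₀ hC0, ← zpow_add_one₀ hC0]; congr 1; ring
  linear_combination
    (x 4 * x 5 * (B ^ ((j + 3*m)*j + j + 3*m^2 + 2*m) * B ^ ((j + 1 + 3*m)*(j+1) + (j+1) + 3*m^2 + 2*m))
      * (C ^ ((j + 3*m)*j + 3*m^2) * C ^ ((j + 1 + 3*m)*(j+1) + 3*m^2))
      * (D ^ (n^2 - n) * D ^ (n^2) * E ^ (n^2) * E ^ (n^2 + n))) * hAA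
    + (x 4 * x 5 * (A ^ ((j + 1 + 3*m)*j + j + 3*m^2 + 3*m + 1) * A ^ ((j + 3*m)*(j+1) + (j+1) + 3*m^2 - m))
      * (C ^ ((j + 3*m)*j + 3*m^2) * C ^ ((j + 1 + 3*m)*(j+1) + 3*m^2))
      * (D ^ (n^2 - n) * D ^ (n^2) * E ^ (n^2) * E ^ (n^2 + n))) * hBB
    + (x 4 * x 5 * (A ^ ((j + 1 + 3*m)*j + j + 3*m^2 + 3*m + 1) * A ^ ((j + 3*m)*(j+1) + (j+1) + 3*m^2 - m))
      * (B ^ ((j + 1 + 3*m)*j + j + 3*m^2 + 4*m + 1) * B ^ ((j + 3*m)*(j+1) + (j+1) + 3*m^2))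
      * (D ^ (n^2 - n) * D ^ (n^2) * E ^ (n^2) * E ^ (n^2 + n))) * hCC
    + ((A ^ ((j + 1 + 3*m)*j + j + 3*m^2 + 3*m + 1) * A ^ ((j + 3*m)*(j+1) + (j+1) + 3*m^2 - m))
      * (B ^ ((j + 1 + 3*m)*j + j + 3*m^2 + 4*m + 1) * B ^ ((j + 3*m)*(j+1) + (j+1) + 3*m^2))
      * (C ^ ((j + 1 + 3*m)*j + 3*m^2 + 2*m) * C ^ ((j + 3*m)*(j+1) + 3*m^2 - 2*m))
      * (D ^ (n^2 - n) * D ^ (n^2) * E ^ (n^2) * E ^ (n^2 + n))) * key_exchange
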